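/- arXiv:math/9904188 — 2 statements merged into one kernel-verified Lean document; each statement's English description precedes it below -/
import Mathlib

section
/- A sum of exponentials g(ξ,η,t) = Σ_{j=1}^N e^{χ_j}, with χ_j = k_j(t)ξ + l_j(t)η + ∫₀ᵗ Ω_j(s)ds where each (k_j, l_j, Ω_j) satisfies the evolution equations i·k_j' - i·ω₁·k_j = -ω₀, i·l_j' - i·ω₁·l_j = -ω₀ and the dispersion relation i·Ω_j + k_j² + l_j² - i·a₁(k_j - l_j) - i·ω₁ = 0, satisfies the linear PDE i·g_t + g_{ξξ} + g_{ηη} - i·ω₁(ξ g_ξ + η g_η) - i·a₁(g_ξ - g_η) + (ω₀(ξ+η) - i·ω₁)·g = 0. -/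
open Complex Real Finset

/-- A superposition `g = Σ_{j=1}^N e^{χ_j}` of exponentials whose data
`(k_j, l_j, Ω_j)` satisfy the evolution equations and dispersion relations
satisfies the linear (O(ε)) PDE. -/
theorem sum_of_exponentials_solves_linear_pde
    (N : ℕ) (ω₀ ω₁ a₁ : ℝ) (k l Ω : Fin N → ℝ → ℂ)
    (hk : ∀ j, Differentiable ℝ (k j)) (hl : ∀ j, Differentiable ℝ (l j))
    (hΩ : ∀ j, Continuous (Ω j))
    (hkeq : ∀ j, ∀ t : ℝ,
      Complex.I * deriv (k j) t - Complex.I * (ω₁ : ℂ) * k j t = -(ω₀ : ℂ))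
    (hleq : ∀ j, ∀ t : ℝ,
      Complex.I * deriv (l j) t - Complex.I * (ω₁ : ℂ) * l j t = -(ω₀ : ℂ))
    (hdisp : ∀ j, ∀ t : ℝ, Complex.I * Ω j t + (k j t) ^ 2 + (l j t) ^ 2
        - Complex.I * (a₁ : ℂ) * (k j t - l j t) - Complex.I * (ω₁ : ℂ) = 0)
    (g : ℝ → ℝ → ℝ → ℂ)
    (hg : ∀ ξ η t : ℝ,
      g ξ η t = ∑ j : Fin N,
        Complex.exp (k j t * ξ + l j t * η + ∫ s in (0:ℝ)..t, Ω j s)) :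
    ∀ ξ η t : ℝ,
      Complex.I * deriv (fun τ => g ξ η τ) t
        + deriv (fun x => deriv (fun x' => g x' η t) x) ξ
        + deriv (fun y => deriv (fun y' => g ξ y' t) y) η
        - Complex.I * (ω₁ : ℂ) * ((ξ : ℂ) * deriv (fun x' => g x' η t) ξ
            + (η : ℂ) * deriv (fun y' => g ξ y' t) η)
        - Complex.I * (a₁ : ℂ) * (deriv (fun x' => g x' η t) ξ
            - deriv (fun y' => g ξ y' t) η)
        + ((ω₀ : ℂ) * ((ξ : ℂ) + (η : ℂ)) - Complex.I * (ω₁ : ℂ)) * g ξ η t = 0 := by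
  intro ξ η t
  simp only [hg]
  -- the exponential terms
  set E : Fin N → ℂ := fun j =>
    Complex.exp (k j t * ξ + l j t * η + ∫ s in (0:ℝ)..t, Ω j s) with hE
  -- ξ-derivatives
  have hdξ : ∀ x : ℝ, HasDerivAt (fun x' : ℝ => ∑ j : Fin N,
      Complex.exp (k j t * x' + l j t * η + ∫ s in (0:ℝ)..t, Ω j s))
      (∑ j : Fin N,
        k j t * Complex.exp (k j t * x + l j t * η + ∫ s in (0:ℝ)..t, Ω j s)) x := by
    intro x
    refine HasDerivAt.fun_sum fun j _ => ?_
    have h : HasDerivAt (fun w : ℂ =>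
        Complex.exp (k j t * w + l j t * η + ∫ s in (0:ℝ)..t, Ω j s))
        (Complex.exp (k j t * x + l j t * η + ∫ s in (0:ℝ)..t, Ω j s) * (k j t * 1))
        (x : ℂ) :=
      ((((hasDerivAt_id (x : ℂ)).const_mul (k j t)).add_const _).add_const _).cexp
    simpa [mul_comm] using h.comp_ofReal
  have hdη : ∀ y : ℝ, HasDerivAt (fun y' : ℝ => ∑ j : Fin N,
      Complex.exp (k j t * ξ + l j t * y' + ∫ s in (0:ℝ)..t, Ω j s))
      (∑ j : Fin N,
        l j t * Complex.exp (k j t * ξ + l j t * y + ∫ s in (0:ℝ)..t, Ω j s)) y := by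
    intro y
    refine HasDerivAt.fun_sum fun j _ => ?_
    have h : HasDerivAt (fun w : ℂ =>
        Complex.exp (k j t * ξ + l j t * w + ∫ s in (0:ℝ)..t, Ω j s))
        (Complex.exp (k j t * ξ + l j t * y + ∫ s in (0:ℝ)..t, Ω j s) * (l j t * 1))
        (y : ℂ) :=
      ((((hasDerivAt_id (y : ℂ)).const_mul (l j t)).const_add _).add_const _).cexp
    simpa [mul_comm] using h.comp_ofReal
  -- t-derivative
  have hdt : HasDerivAt (fun τ : ℝ => ∑ j : Fin N,
      Complex.exp (k j τ * ξ + l j τ * η + ∫ s in (0:ℝ)..τ, Ω j s))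
      (∑ j : Fin N, (deriv (k j) t * ξ + deriv (l j) t * η + Ω j t) * E j) t := by
    refine HasDerivAt.fun_sum fun j _ => ?_
    have h1 : HasDerivAt (fun τ : ℝ => k j τ * (ξ : ℂ)) (deriv (k j) t * ξ) t :=
      ((hk j).differentiableAt.hasDerivAt).mul_const _
    have h2 : HasDerivAt (fun τ : ℝ => l j τ * (η : ℂ)) (deriv (l j) t * η) t :=
      ((hl j).differentiableAt.hasDerivAt).mul_const _
    have h3 : HasDerivAt (fun τ : ℝ => ∫ s in (0:ℝ)..τ, Ω j s) (Ω j t) t :=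
      intervalIntegral.integral_hasDerivAt_right ((hΩ j).intervalIntegrable 0 t)
        ((hΩ j).aestronglyMeasurable.stronglyMeasurableAtFilter)
        ((hΩ j).continuousAt)
    have h := ((h1.add h2).add h3).cexp
    simpa [hE, mul_comm] using h
  -- rewrite all derivatives
  have e1 : (fun x : ℝ => deriv (fun x' : ℝ => ∑ j : Fin N,
      Complex.exp (k j t * x' + l j t * η + ∫ s in (0:ℝ)..t, Ω j s)) x)
      = fun x : ℝ => ∑ j : Fin N,
        k j t * Complex.exp (k j t * x + l j t * η + ∫ s in (0:ℝ)..t, Ω j s) :=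
    funext fun x => (hdξ x).deriv
  have e2 : (fun y : ℝ => deriv (fun y' : ℝ => ∑ j : Fin N,
      Complex.exp (k j t * ξ + l j t * y' + ∫ s in (0:ℝ)..t, Ω j s)) y)
      = fun y : ℝ => ∑ j : Fin N,
        l j t * Complex.exp (k j t * ξ + l j t * y + ∫ s in (0:ℝ)..t, Ω j s) :=
    funext fun y => (hdη y).deriv
  have hdξξ : HasDerivAt (fun x : ℝ => ∑ j : Fin N,
      k j t * Complex.exp (k j t * x + l j t * η + ∫ s in (0:ℝ)..t, Ω j s))
      (∑ j : Fin N, k j t * (k j t * E j)) ξ := by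
    refine HasDerivAt.fun_sum fun j _ => ?_
    have h : HasDerivAt (fun w : ℂ =>
        Complex.exp (k j t * w + l j t * η + ∫ s in (0:ℝ)..t, Ω j s))
        (E j * (k j t * 1)) (ξ : ℂ) :=
      ((((hasDerivAt_id (ξ : ℂ)).const_mul (k j t)).add_const _).add_const _).cexp
    have := (h.comp_ofReal).const_mul (k j t)
    simpa [mul_comm, mul_left_comm] using this
  have hdηη : HasDerivAt (fun y : ℝ => ∑ j : Fin N,
      l j t * Complex.exp (k j t * ξ + l j t * y + ∫ s in (0:ℝ)..t, Ω j s))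
      (∑ j : Fin N, l j t * (l j t * E j)) η := by
    refine HasDerivAt.fun_sum fun j _ => ?_
    have h : HasDerivAt (fun w : ℂ =>
        Complex.exp (k j t * ξ + l j t * w + ∫ s in (0:ℝ)..t, Ω j s))
        (E j * (l j t * 1)) (η : ℂ) :=
      ((((hasDerivAt_id (η : ℂ)).const_mul (l j t)).const_add _).add_const _).cexp
    have := (h.comp_ofReal).const_mul (l j t)
    simpa [mul_comm, mul_left_comm] using this
  rw [e1, e2, hdt.deriv, hdξξ.deriv, hdηη.deriv, (hdξ ξ).deriv, (hdη η).deriv]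
  simp only [← hE, Finset.mul_sum, ← Finset.sum_add_distrib, ← Finset.sum_sub_distrib]
  refine Finset.sum_eq_zero fun j _ => ?_
  have h1 := hkeq j t
  have h2 := hleq j t
  have h3 := hdisp j t
  linear_combination (↑ξ * E j) * h1 + (↑η * E j) * h2 + E j * h3
end

section
/- With δ, α, β, γ > 0 and δγ - αβ > 0, the (1,1)-dromion q(ξ,η) = ρ·e^{χ₁+χ₂}/(δ + α e^{χ₁+χ₁*} + β e^{χ₂+χ₂*} + γ e^{χ₁+χ₁*+χ₂+χ₂*}), where χ₁ = k₁ξ + c₁, χ₂ = l₁η + c₂ with Re k₁ > 0, Re l₁ > 0, is exponentially localized: |q(ξ,η)| → 0 as |ξ| + |η| → ∞, and |q| decays exponentially in every direction of the (ξ,η)-plane. -/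
open Complex Real

private lemma denom_lower (δ α β γ m a b : ℝ)
    (hmδ : m ≤ δ) (hmα : m ≤ α) (hmβ : m ≤ β) (hmγ : m ≤ γ) (hm0 : 0 < m) :
    m * Real.exp (|a| + a + (|b| + b)) ≤
      δ + α * Real.exp (2*a) + β * Real.exp (2*b) + γ * Real.exp (2*a + 2*b) := by
  have e1 := Real.exp_pos (2*a)
  have e2 := Real.exp_pos (2*b)
  have e3 := Real.exp_pos (2*a+2*b)
  have hδ0 : 0 < δ := hm0.trans_le hmδ
  have hα0 : 0 < α := hm0.trans_le hmα
  have hβ0 : 0 < β := hm0.trans_le hmβ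
  have hγ0 : 0 < γ := hm0.trans_le hmγ
  rcases abs_cases a with ⟨ha, _⟩ | ⟨ha, _⟩ <;>
    rcases abs_cases b with ⟨hb, _⟩ | ⟨hb, _⟩ <;> rw [ha, hb]
  · rw [show a + a + (b + b) = 2*a + 2*b by ring]
    nlinarith [mul_le_mul_of_nonneg_right hmγ e3.le, mul_pos hα0 e1, mul_pos hβ0 e2]
  · rw [show a + a + (-b + b) = 2*a by ring]
    nlinarith [mul_le_mul_of_nonneg_right hmα e1.le, mul_pos hβ0 e2, mul_pos hγ0 e3]
  · rw [show -a + a + (b + b) = 2*b by ring]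
    nlinarith [mul_le_mul_of_nonneg_right hmβ e2.le, mul_pos hα0 e1, mul_pos hγ0 e3]
  · rw [show -a + a + (-b + b) = (0:ℝ) by ring, Real.exp_zero, mul_one]
    nlinarith [mul_pos hα0 e1, mul_pos hβ0 e2, mul_pos hγ0 e3]

/-- The (1,1)-dromion is exponentially localized: there are `C, μ > 0` with
`|q(ξ,η)| ≤ C e^{-μ(|ξ|+|η|)}` for all `ξ, η`. -/
theorem dromion_exponentially_localized
    (α β γ δ ρ : ℝ) (k₁ l₁ c₁ c₂ : ℂ)
    (hα : 0 < α) (hβ : 0 < β) (hγ : 0 < γ) (hδ : 0 < δ) (hρ : 0 < ρ)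
    (hpos : α * β < δ * γ)
    (hk : 0 < k₁.re) (hl : 0 < l₁.re)
    (q : ℝ → ℝ → ℂ)
    (hq : ∀ ξ η : ℝ,
      q ξ η = (ρ : ℂ) * Complex.exp ((k₁ * ξ + c₁) + (l₁ * η + c₂))
        / ((δ : ℂ) + (α : ℂ) * Complex.exp ((k₁ * ξ + c₁) + (starRingEnd ℂ) (k₁ * ξ + c₁))
          + (β : ℂ) * Complex.exp ((l₁ * η + c₂) + (starRingEnd ℂ) (l₁ * η + c₂))
          + (γ : ℂ) * Complex.exp ((k₁ * ξ + c₁) + (starRingEnd ℂ) (k₁ * ξ + c₁)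
              + (l₁ * η + c₂) + (starRingEnd ℂ) (l₁ * η + c₂)))) :
    ∃ C μ : ℝ, 0 < C ∧ 0 < μ ∧
      ∀ ξ η : ℝ, ‖q ξ η‖ ≤ C * Real.exp (-μ * (|ξ| + |η|)) := by
  have hμ : 0 < min k₁.re l₁.re := lt_min hk hl
  set m := min (min δ α) (min β γ) with hmdef
  have hm0 : 0 < m := lt_min (lt_min hδ hα) (lt_min hβ hγ)
  have hmδ : m ≤ δ := le_trans (min_le_left _ _) (min_le_left _ _)
  have hmα : m ≤ α := le_trans (min_le_left _ _) (min_le_right _ _)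
  have hmβ : m ≤ β := le_trans (min_le_right _ _) (min_le_left _ _)
  have hmγ : m ≤ γ := le_trans (min_le_right _ _) (min_le_right _ _)
  refine ⟨ρ / m * Real.exp (|c₁.re| + |c₂.re|), min k₁.re l₁.re, by positivity, hμ, ?_⟩
  intro ξ η
  rw [hq]
  set a := k₁.re * ξ + c₁.re with hadef
  set b := l₁.re * η + c₂.re with hbdef
  have hre1 : (k₁ * ξ + c₁).re = a := by simp [hadef]
  have hre2 : (l₁ * η + c₂).re = b := by simp [hbdef]
  have hz1 : (k₁ * ξ + c₁) + (starRingEnd ℂ) (k₁ * ξ + c₁) = ((2*a : ℝ) : ℂ) := by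
    rw [Complex.add_conj, hre1]
  have hz2 : (l₁ * η + c₂) + (starRingEnd ℂ) (l₁ * η + c₂) = ((2*b : ℝ) : ℂ) := by
    rw [Complex.add_conj, hre2]
  have hz3 : (k₁ * ξ + c₁) + (starRingEnd ℂ) (k₁ * ξ + c₁)
      + (l₁ * η + c₂) + (starRingEnd ℂ) (l₁ * η + c₂) = ((2*a + 2*b : ℝ) : ℂ) := by
    push_cast at hz1 hz2 ⊢
    linear_combination hz1 + hz2
  set D : ℝ := δ + α * Real.exp (2*a) + β * Real.exp (2*b) + γ * Real.exp (2*a + 2*b)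
    with hDdef
  have hD0 : 0 < D := by positivity
  have hDc : (δ : ℂ) + (α : ℂ) * Complex.exp ((k₁ * ξ + c₁) + (starRingEnd ℂ) (k₁ * ξ + c₁))
          + (β : ℂ) * Complex.exp ((l₁ * η + c₂) + (starRingEnd ℂ) (l₁ * η + c₂))
          + (γ : ℂ) * Complex.exp ((k₁ * ξ + c₁) + (starRingEnd ℂ) (k₁ * ξ + c₁)
              + (l₁ * η + c₂) + (starRingEnd ℂ) (l₁ * η + c₂)) = ((D : ℝ) : ℂ) := by
    rw [hz3, hz1, hz2, ← Complex.ofReal_exp, ← Complex.ofReal_exp, ← Complex.ofReal_exp, hDdef]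
    push_cast; ring
  rw [hDc, norm_div, norm_mul, Complex.norm_real, Complex.norm_real, Complex.norm_exp,
    Real.norm_eq_abs, Real.norm_eq_abs, abs_of_pos hρ, abs_of_pos hD0]
  have hnre : ((k₁ * ξ + c₁) + (l₁ * η + c₂)).re = a + b := by
    rw [Complex.add_re, hre1, hre2]
  rw [hnre]
  have key : Real.exp (a + b) / D ≤ Real.exp (-(|a| + |b|)) / m := by
    have h1 : m * Real.exp (|a| + a + (|b| + b)) ≤ D :=
      denom_lower δ α β γ m a b hmδ hmα hmβ hmγ hm0
    have h2 : Real.exp (a + b) / D ≤ Real.exp (a + b) / (m * Real.exp (|a| + a + (|b| + b))) :=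
      div_le_div_of_nonneg_left (Real.exp_pos _).le (by positivity) h1
    refine h2.trans (le_of_eq ?_)
    have hE : Real.exp (a + b) = Real.exp (-(|a| + |b|)) * Real.exp (|a| + a + (|b| + b)) := by
      rw [← Real.exp_add]; congr 1; ring
    rw [hE, mul_comm m, ← div_div, mul_div_assoc, div_self (Real.exp_ne_zero _), mul_one]
  have hab : min k₁.re l₁.re * (|ξ| + |η|) - (|c₁.re| + |c₂.re|) ≤ |a| + |b| := by
    have h1 : min k₁.re l₁.re * |ξ| - |c₁.re| ≤ |a| := by
      have : k₁.re * |ξ| - |c₁.re| ≤ |a| := by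
        rw [hadef]
        have := abs_add_le (k₁.re * ξ) c₁.re
        have h2 : |k₁.re * ξ| = k₁.re * |ξ| := by
          rw [abs_mul, abs_of_pos hk]
        calc k₁.re * |ξ| - |c₁.re| = |k₁.re * ξ| - |c₁.re| := by rw [h2]
          _ ≤ |k₁.re * ξ + c₁.re| := by
              have := abs_add_le (k₁.re * ξ + c₁.re) (-c₁.re)
              simp at this
              linarith [this, abs_mul k₁.re ξ]
      have h3 : min k₁.re l₁.re * |ξ| ≤ k₁.re * |ξ| :=
        mul_le_mul_of_nonneg_right (min_le_left _ _) (abs_nonneg _)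
      linarith
    have h4 : min k₁.re l₁.re * |η| - |c₂.re| ≤ |b| := by
      have : l₁.re * |η| - |c₂.re| ≤ |b| := by
        rw [hbdef]
        have h2 : |l₁.re * η| = l₁.re * |η| := by
          rw [abs_mul, abs_of_pos hl]
        calc l₁.re * |η| - |c₂.re| = |l₁.re * η| - |c₂.re| := by rw [h2]
          _ ≤ |l₁.re * η + c₂.re| := by
              have := abs_add_le (l₁.re * η + c₂.re) (-c₂.re)
              simp at this
              linarith [this, abs_mul l₁.re η]
      have h3 : min k₁.re l₁.re * |η| ≤ l₁.re * |η| :=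
        mul_le_mul_of_nonneg_right (min_le_right _ _) (abs_nonneg _)
      linarith
    linarith [h1, h4]
  calc ρ * Real.exp (a + b) / D = ρ * (Real.exp (a + b) / D) := by ring
    _ ≤ ρ * (Real.exp (-(|a| + |b|)) / m) := by
        exact mul_le_mul_of_nonneg_left key hρ.le
    _ ≤ ρ / m * Real.exp (|c₁.re| + |c₂.re|) * Real.exp (-(min k₁.re l₁.re) * (|ξ| + |η|)) := by
        rw [mul_assoc, ← Real.exp_add]
        have : Real.exp (-(|a| + |b|)) ≤
            Real.exp (|c₁.re| + |c₂.re| + -(min k₁.re l₁.re) * (|ξ| + |η|)) :=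
          Real.exp_le_exp.mpr (by linarith)
        calc ρ * (Real.exp (-(|a| + |b|)) / m) = ρ / m * Real.exp (-(|a| + |b|)) := by ring
          _ ≤ _ := mul_le_mul_of_nonneg_left this (by positivity)
end
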